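/- arXiv:1609.01080 — 5 statements merged into one kernel-verified Lean document; each statement's English description precedes it below -/
import Mathlib

section
/- For every t ∈ (0, π), cot t = 1/t + 2t Σ_{k=1}^∞ 1/(t² − π²k²), where the series converges absolutely. -/
/-!
Logarithmic differentiation of Euler's product `sin (π z) = π z ∏ (1 - z² / n²)` gives
`π cot (π z) = 1 / z + ∑ₙ 2z / (z² - n²)` off the integers (Mathlib's `cot_series_rep'`).
Taking `z = t / π` real and rescaling yields the expansion; over `ℝ`, summability is absolute.
-/

open Real

lemma Complex.hasSum_cotTerm {x : ℂ} (hx : x ∈ Complex.integerComplement) :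
    HasSum (cotTerm x) (π * Complex.cot (π * x) - 1 / x) :=
  cot_series_rep' hx ▸ (summable_cotTerm hx).hasSum

lemma Real.hasSum_cot_pi_mul_sub_inv {x : ℝ} (hx : ∀ n : ℤ, (n : ℝ) ≠ x) :
    HasSum (fun n : ℕ => 2 * x / (x ^ 2 - ((n : ℝ) + 1) ^ 2)) (π * Real.cot (π * x) - 1 / x) := by
  have hxC : (x : ℂ) ∈ Complex.integerComplement := by
    rintro ⟨n, hn⟩
    exact hx n (by exact_mod_cast hn)
  rw [← Complex.hasSum_ofReal]
  push_cast
  convert Complex.hasSum_cotTerm hxC using 2 with n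
  rw [cotTerm_identity hxC, ← sq_sub_sq]
  ring

lemma Real.hasSum_one_div_sq_sub_pi_sq_mul_sq {t : ℝ} (ht : Real.sin t ≠ 0) :
    HasSum (fun k : ℕ => 1 / (t ^ 2 - π ^ 2 * ((k : ℝ) + 1) ^ 2))
      ((Real.cot t - 1 / t) / (2 * t)) := by
  have hπ := Real.pi_ne_zero
  have ht0 : t ≠ 0 := by rintro rfl; simp at ht
  have hx : ∀ n : ℤ, (n : ℝ) ≠ t / π := fun n hn =>
    Real.sin_ne_zero_iff.mp ht n (by rw [hn]; field_simp)
  have key := (Real.hasSum_cot_pi_mul_sub_inv hx).div_const (2 * t * π)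
  rw [mul_div_cancel₀ t hπ] at key
  have hterm (k : ℕ) : 1 / (t ^ 2 - π ^ 2 * ((k : ℝ) + 1) ^ 2) =
      2 * (t / π) / ((t / π) ^ 2 - ((k : ℝ) + 1) ^ 2) / (2 * t * π) := by
    have hden : (t / π) ^ 2 - ((k : ℝ) + 1) ^ 2 = (t ^ 2 - π ^ 2 * ((k : ℝ) + 1) ^ 2) / π ^ 2 := by
      field_simp
    rw [hden, div_div_eq_mul_div, div_right_comm]
    congr 1
    field_simp
  have hvalue : (Real.cot t - 1 / t) / (2 * t) = (π * Real.cot t - 1 / (t / π)) / (2 * t * π) := by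
    rw [one_div_div, ← mul_one_div π t, ← mul_sub, mul_comm (2 * t) π, mul_div_mul_left _ _ hπ]
  simpa only [hterm, hvalue] using key

theorem cot_mittag_leffler (t : ℝ) (ht : t ∈ Set.Ioo 0 π) :
    (Summable fun k : ℕ => |1 / (t ^ 2 - π ^ 2 * ((k : ℝ) + 1) ^ 2)|) ∧
    Real.cot t = 1 / t + 2 * t * ∑' k : ℕ, 1 / (t ^ 2 - π ^ 2 * ((k : ℝ) + 1) ^ 2) := by
  have hsum := Real.hasSum_one_div_sq_sub_pi_sq_mul_sq (Real.sin_pos_of_pos_of_lt_pi ht.1 ht.2).ne'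
  refine ⟨hsum.summable.abs, ?_⟩
  rw [hsum.tsum_eq]
  field_simp [ht.1.ne']
  ring
end

section
/- For every real c < 0 and every r > 0, the quantity D_c(r) := r·√(−c)·coth(√(−c)·r) − 1 satisfies D_c(r) ≥ 3|c|r²/(π² + |c|r²). -/
/-!
With x = √|c|·r the claim is x·coth x − 1 ≥ 3x²/(π² + x²), i.e.
g(x) = x(π² + x²) cosh x − (π² + 4x²) sinh x ≥ 0 for x > 0. Here g(0) = 0 and g'(x) = x·h(x) with
h(x) = (x² + π² − 8) sinh x − x cosh x, while h(0) = 0 and h'(x) = x sinh x + (x² + π² − 9) cosh x ≥ 0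
because π² > 9. So h, and hence g, is increasing. The constant 9 is sharp: with 9 in place of π²,
the x³ Taylor coefficient of g vanishes.
-/

open Real

lemma mul_nonneg_of_monotone_of_map_zero {f : ℝ → ℝ} (hf : Monotone f) (h0 : f 0 = 0) (x : ℝ) :
    0 ≤ x * f x := by
  rcases le_total 0 x with hx | hx
  · exact mul_nonneg hx (h0 ▸ hf hx)
  · exact mul_nonneg_of_nonpos_of_nonpos hx (h0 ▸ hf hx)

section

variable {a : ℝ}

lemma monotone_sq_add_sub_eight_mul_sinh_sub_mul_cosh (ha : 9 ≤ a) :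
    Monotone fun x : ℝ => (x ^ 2 + a - 8) * sinh x - x * cosh x := by
  refine monotone_of_hasDerivAt_nonneg
    (f' := fun x => x * sinh x + (x ^ 2 + a - 9) * cosh x) (fun x => ?_) (fun x => ?_)
  · have hpoly : HasDerivAt (fun y : ℝ => y ^ 2 + a - 8) (2 * x) x := by
      simpa using ((hasDerivAt_pow 2 x).add_const a).sub_const 8
    refine ((hpoly.mul (hasDerivAt_sinh x)).sub
      ((hasDerivAt_id x).mul (hasDerivAt_cosh x))).congr_deriv ?_
    simp only [id]
    ring
  · have hsinh := mul_nonneg_of_monotone_of_map_zero sinh_strictMono.monotone sinh_zero x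
    have hcosh := cosh_pos x
    dsimp only [Pi.zero_apply]
    nlinarith [sq_nonneg x]

lemma monotone_mul_cosh_sub_mul_sinh (ha : 9 ≤ a) :
    Monotone fun x : ℝ => x * (a + x ^ 2) * cosh x - (a + 4 * x ^ 2) * sinh x := by
  refine monotone_of_hasDerivAt_nonneg
    (f' := fun x => x * ((x ^ 2 + a - 8) * sinh x - x * cosh x)) (fun x => ?_)
    (mul_nonneg_of_monotone_of_map_zero (monotone_sq_add_sub_eight_mul_sinh_sub_mul_cosh ha)
      (by simp))
  have hcubic : HasDerivAt (fun y : ℝ => y * (a + y ^ 2)) (a + 3 * x ^ 2) x := by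
    refine ((hasDerivAt_id x).mul ((hasDerivAt_pow 2 x).const_add a)).congr_deriv ?_
    simp only [id]
    ring
  have hquad : HasDerivAt (fun y : ℝ => a + 4 * y ^ 2) (8 * x) x := by
    refine (((hasDerivAt_pow 2 x).const_mul 4).const_add a).congr_deriv ?_
    push_cast
    ring
  refine ((hcubic.mul (hasDerivAt_cosh x)).sub (hquad.mul (hasDerivAt_sinh x))).congr_deriv ?_
  ring

lemma three_mul_sq_div_le_mul_cosh_div_sinh_sub_one (ha : 9 ≤ a) {x : ℝ} (hx : 0 < x) :
    3 * x ^ 2 / (a + x ^ 2) ≤ x * (cosh x / sinh x) - 1 := by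
  have hg := monotone_mul_cosh_sub_mul_sinh ha hx.le
  simp only [sinh_zero, cosh_zero] at hg
  have hsinh : 0 < sinh x := sinh_pos_iff.2 hx
  rw [div_le_iff₀ (by positivity), mul_div_assoc', div_sub_one hsinh.ne', div_mul_eq_mul_div,
    le_div_iff₀ hsinh]
  linear_combination hg

end

theorem D_c_lower_bound (c r : ℝ) (hc : c < 0) (hr : 0 < r) :
    r * Real.sqrt (-c) * (Real.cosh (Real.sqrt (-c) * r) / Real.sinh (Real.sqrt (-c) * r)) - 1 ≥
      3 * |c| * r ^ 2 / (π ^ 2 + |c| * r ^ 2) := by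
  have hsq : Real.sqrt (-c) ^ 2 = |c| := by rw [sq_sqrt (by linarith), abs_of_neg hc]
  have hpi : (9 : ℝ) ≤ π ^ 2 := by nlinarith [pi_gt_three]
  have key := three_mul_sq_div_le_mul_cosh_div_sinh_sub_one hpi
    (mul_pos (sqrt_pos.2 (neg_pos.2 hc)) hr)
  rw [mul_pow, hsq, ← mul_assoc] at key
  rwa [mul_comm r]
end

section
/- Let k_0 < 0 and let d_i, d_j, d_{ij} > 0 satisfy the hyperbolic cosine law inequality cos γ ≤ (cosh(√(−k_0)d_i)·cosh(√(−k_0)d_j) − cosh(√(−k_0)d_{ij})) / (sinh(√(−k_0)d_i)·sinh(√(−k_0)d_j)) for some γ ∈ [0, π]. Then 1/d_i² + 1/d_j² − 2cos(γ)/(d_i d_j) ≥ (4/(d_i d_j))·(s_{k_0}(d_{ij}/2)² / (s_{k_0}(d_i)·s_{k_0}(d_j))) + R_{ij}(k_0), where s_{k_0}(r) = sinh(√(−k_0)r)/√(−k_0) and R_{ij}(k_0) = 1/d_i² + 1/d_j² − (2/(k_0 d_i d_j))·(1/(s_{k_0}(d_i)s_{k_0}(d_j)) − ct_{k_0}(d_i)·ct_{k_0}(d_j))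 with ct_{k_0}(r) = √(−k_0)·coth(√(−k_0)r). -/
open Real

theorem hyperbolic_angle_comparison (k₀ di dj dij γ : ℝ)
    (hk : k₀ < 0) (hdi : 0 < di) (hdj : 0 < dj) (hdij : 0 < dij)
    (hγ : γ ∈ Set.Icc 0 π)
    (hcos : Real.cos γ ≤
      (Real.cosh (Real.sqrt (-k₀) * di) * Real.cosh (Real.sqrt (-k₀) * dj)
        - Real.cosh (Real.sqrt (-k₀) * dij)) /
      (Real.sinh (Real.sqrt (-k₀) * di) * Real.sinh (Real.sqrt (-k₀) * dj))) :
    1 / di ^ 2 + 1 / dj ^ 2 - 2 * Real.cos γ / (di * dj) ≥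
      (4 / (di * dj)) *
        ((Real.sinh (Real.sqrt (-k₀) * (dij / 2)) / Real.sqrt (-k₀)) ^ 2 /
          ((Real.sinh (Real.sqrt (-k₀) * di) / Real.sqrt (-k₀)) *
            (Real.sinh (Real.sqrt (-k₀) * dj) / Real.sqrt (-k₀))))
      + (1 / di ^ 2 + 1 / dj ^ 2 - (2 / (k₀ * di * dj)) *
          (1 / ((Real.sinh (Real.sqrt (-k₀) * di) / Real.sqrt (-k₀)) *
                 (Real.sinh (Real.sqrt (-k₀) * dj) / Real.sqrt (-k₀)))
            - (Real.sqrt (-k₀) * (Real.cosh (Real.sqrt (-k₀) * di) / Real.sinh (Real.sqrt (-k₀) * di))) *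
              (Real.sqrt (-k₀) * (Real.cosh (Real.sqrt (-k₀) * dj) / Real.sinh (Real.sqrt (-k₀) * dj))))) := by
  set k := Real.sqrt (-k₀) with hkdef
  have hkpos : 0 < k := Real.sqrt_pos.mpr (by linarith)
  have hk2 : k ^ 2 = -k₀ := Real.sq_sqrt (by linarith)
  have hsa : 0 < Real.sinh (k * di) := Real.sinh_pos_iff.mpr (by positivity)
  have hsb : 0 < Real.sinh (k * dj) := Real.sinh_pos_iff.mpr (by positivity)
  -- cosh c = 2 sinh(c/2)^2 + 1
  have hcc : Real.cosh (k * dij) = 2 * Real.sinh (k * (dij / 2)) ^ 2 + 1 := by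
    have h2 : k * dij = 2 * (k * (dij / 2)) := by ring
    rw [h2, Real.cosh_two_mul, Real.cosh_sq]
    ring
  have hmul : Real.cos γ * (Real.sinh (k * di) * Real.sinh (k * dj)) ≤
      Real.cosh (k * di) * Real.cosh (k * dj) - Real.cosh (k * dij) := by
    exact (le_div_iff₀ (by positivity)).mp hcos
  rw [hcc] at hmul
  rw [ge_iff_le, ← sub_nonneg]
  have hk0ne : k₀ ≠ 0 := ne_of_lt hk
  have hkne : k ≠ 0 := ne_of_gt hkpos
  have hk0 : k₀ = -(k ^ 2) := by rw [hk2]; ring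
  have h2 : 0 ≤ 2 / (di * dj * (Real.sinh (k * di) * Real.sinh (k * dj))) *
      ((Real.cosh (k * di) * Real.cosh (k * dj) - (2 * Real.sinh (k * (dij / 2)) ^ 2 + 1))
        - Real.cos γ * (Real.sinh (k * di) * Real.sinh (k * dj))) :=
    mul_nonneg (by positivity) (by linarith)
  convert h2 using 1
  rw [hk0]
  field_simp
  ring
end

section
/- Let t ∈ (0, π) and β ∈ [0, π/2) with t < β + π/2. Then (t·cot t − (1))/t² = −2 Σ_{k=1}^∞ 1/(π²k² − t²), and this quantity satisfies −2 Σ_{k=1}^∞ 1/(π²k² − t²) ≥ −2·(1/(π² − (β+π/2)²) + 3/(4π²)). -/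
/-!
Dividing the Mittag-Leffler expansion `π cot (π z) - 1/z = ∑ₙ (1/(z - n) + 1/(z + n))` by `π` at
`z = t/π` gives `cot t - 1/t = -2t ∑_{k ≥ 1} 1/(π²k² - t²)`. All terms are positive for `t² < π²`.
The first one is at most `1/(π² - (β + π/2)²)` because `t < β + π/2 < π`, and for `k ≥ 2` we have
`π²k² - t² ≥ π²(k - 1)(k + 1)`, so the rest telescopes to at most `3/(4π²)`.
-/

open Real

theorem Real.cot_sub_one_div_eq_neg_two_mul_tsum {t : ℝ} (ht : sin t ≠ 0) :
    cot t - 1 / t = -2 * t * ∑' k : ℕ, 1 / (π ^ 2 * ((k : ℝ) + 1) ^ 2 - t ^ 2) := by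
  have hπ : (π : ℂ) ≠ 0 := Complex.ofReal_ne_zero.mpr pi_ne_zero
  have hx : (t / π : ℂ) ∈ Complex.integerComplement := by
    rintro ⟨n, hn⟩
    refine ht (sin_eq_zero_iff.mpr ⟨n, ?_⟩)
    have : (n : ℝ) = t / π := by exact_mod_cast hn
    rw [this, div_mul_cancel₀ _ pi_ne_zero]
  have hterm (n : ℕ) : cotTerm (t / π) n =
      -2 * π * t * (1 / (π ^ 2 * ((n : ℂ) + 1) ^ 2 - t ^ 2)) := by
    rw [cotTerm_identity hx n, show ((t : ℂ) / π + (n + 1)) * (t / π - (n + 1)) =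
      -(π ^ 2 * ((n : ℂ) + 1) ^ 2 - t ^ 2) / π ^ 2 by field_simp; ring, one_div_div, div_neg]
    field_simp
  have h := cot_series_rep' hx
  simp only [hterm, tsum_mul_left, mul_div_cancel₀ _ hπ, one_div_div] at h
  apply Complex.ofReal_injective
  apply mul_left_cancel₀ hπ
  push_cast
  linear_combination h

theorem sum_range_one_div_succ_mul_add_three_le (n : ℕ) :
    ∑ k ∈ Finset.range n, 1 / (((k : ℝ) + 1) * ((k : ℝ) + 3)) ≤ 3 / 4 := by
  set G : ℕ → ℝ := fun k => (1 / ((k : ℝ) + 1) + 1 / ((k : ℝ) + 2)) / 2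
  have hG (k : ℕ) : 1 / (((k : ℝ) + 1) * ((k : ℝ) + 3)) = G k - G (k + 1) := by
    simp only [G]
    push_cast
    field_simp
    ring
  calc _ = G 0 - G n := by simp only [hG]; exact Finset.sum_range_sub' G n
    _ ≤ G 0 := sub_le_self _ (by positivity)
    _ = 3 / 4 := by norm_num [G]

section

variable {t : ℝ}

theorem one_div_pi_sq_mul_succ_sq_sub_sq_nonneg (ht : t ^ 2 ≤ π ^ 2) (k : ℕ) :
    0 ≤ 1 / (π ^ 2 * ((k : ℝ) + 1) ^ 2 - t ^ 2) := by
  have : π ^ 2 ≤ π ^ 2 * ((k : ℝ) + 1) ^ 2 :=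
    le_mul_of_one_le_right (by positivity) (one_le_pow₀ (by simp))
  exact one_div_nonneg.mpr (by linarith)

theorem sum_range_one_div_pi_sq_mul_add_two_sq_sub_sq_le (ht : t ^ 2 ≤ π ^ 2) (n : ℕ) :
    ∑ k ∈ Finset.range n, 1 / (π ^ 2 * ((k : ℝ) + 2) ^ 2 - t ^ 2) ≤ 3 / (4 * π ^ 2) := by
  have hterm (k : ℕ) : 1 / (π ^ 2 * ((k : ℝ) + 2) ^ 2 - t ^ 2) ≤
      1 / π ^ 2 * (1 / (((k : ℝ) + 1) * ((k : ℝ) + 3))) := by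
    rw [one_div_mul_one_div]
    apply one_div_le_one_div_of_le (by positivity)
    nlinarith
  calc _ ≤ ∑ k ∈ Finset.range n, 1 / π ^ 2 * (1 / (((k : ℝ) + 1) * ((k : ℝ) + 3))) :=
        Finset.sum_le_sum fun k _ => hterm k
    _ = 1 / π ^ 2 * ∑ k ∈ Finset.range n, 1 / (((k : ℝ) + 1) * ((k : ℝ) + 3)) :=
        (Finset.mul_sum _ _ _).symm
    _ ≤ 1 / π ^ 2 * (3 / 4) := by gcongr; exact sum_range_one_div_succ_mul_add_three_le n
    _ = 3 / (4 * π ^ 2) := by ring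

theorem sum_range_one_div_pi_sq_mul_succ_sq_sub_sq_le (ht : t ^ 2 ≤ π ^ 2) (n : ℕ) :
    ∑ k ∈ Finset.range n, 1 / (π ^ 2 * ((k : ℝ) + 1) ^ 2 - t ^ 2) ≤
      1 / (π ^ 2 - t ^ 2) + 3 / (4 * π ^ 2) := by
  have hfirst : 0 ≤ 1 / (π ^ 2 - t ^ 2) := one_div_nonneg.mpr (by linarith)
  cases n with
  | zero => simp only [Finset.range_zero, Finset.sum_empty]; positivity
  | succ n =>
    rw [Finset.sum_range_succ']
    have htail := sum_range_one_div_pi_sq_mul_add_two_sq_sub_sq_le ht n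
    push_cast
    simp only [add_assoc, one_add_one_eq_two, zero_add, one_pow, mul_one]
    linarith

theorem tsum_one_div_pi_sq_mul_succ_sq_sub_sq_le (ht : t ^ 2 ≤ π ^ 2) :
    ∑' k : ℕ, 1 / (π ^ 2 * ((k : ℝ) + 1) ^ 2 - t ^ 2) ≤ 1 / (π ^ 2 - t ^ 2) + 3 / (4 * π ^ 2) :=
  Real.tsum_le_of_sum_range_le (one_div_pi_sq_mul_succ_sq_sub_sq_nonneg ht)
    (sum_range_one_div_pi_sq_mul_succ_sq_sub_sq_le ht)

end

theorem cot_quantitative_estimate (t β : ℝ) (ht : t ∈ Set.Ioo 0 π)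
    (hβ : β ∈ Set.Ico 0 (π / 2)) (htβ : t < β + π / 2) :
    (t * Real.cot t - 1) / t ^ 2 =
      -2 * ∑' k : ℕ, 1 / (π ^ 2 * ((k : ℝ) + 1) ^ 2 - t ^ 2) ∧
    -2 * ∑' k : ℕ, 1 / (π ^ 2 * ((k : ℝ) + 1) ^ 2 - t ^ 2) ≥
      -2 * (1 / (π ^ 2 - (β + π / 2) ^ 2) + 3 / (4 * π ^ 2)) := by
  obtain ⟨ht0, htπ⟩ := ht
  have hβπ : β + π / 2 < π := by linarith [hβ.2]
  have htβ2 : t ^ 2 < (β + π / 2) ^ 2 := by nlinarith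
  have hβπ2 : (β + π / 2) ^ 2 < π ^ 2 := by nlinarith
  refine ⟨?_, ?_⟩
  · rw [show t * cot t - 1 = t * (cot t - 1 / t) by field_simp,
      cot_sub_one_div_eq_neg_two_mul_tsum (sin_pos_of_pos_of_lt_pi ht0 htπ).ne']
    field_simp
  · have hsum := tsum_one_div_pi_sq_mul_succ_sq_sub_sq_le (htβ2.trans hβπ2).le
    have hfirst : 1 / (π ^ 2 - t ^ 2) ≤ 1 / (π ^ 2 - (β + π / 2) ^ 2) :=
      one_div_le_one_div_of_le (by linarith) (by linarith)
    linarith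
end

section
/- Let k_0 < 0 and d_i, d_j > 0. Then R_{ij}(k_0) := 1/d_i² + 1/d_j² − (2/(k_0 d_i d_j))·(1/(s_{k_0}(d_i)·s_{k_0}(d_j)) − ct_{k_0}(d_i)·ct_{k_0}(d_j)) is nonnegative, where s_{k_0}(r) = sinh(√(−k_0)·r)/√(−k_0) and ct_{k_0}(r) = √(−k_0)·coth(√(−k_0)·r). -/
/-!
Writing `a = s + m`, `b = s - m`, the addition formulas turn the key inequality
`2ab (cosh a cosh b - 1) ≤ (a² + b²) sinh a sinh b` into `(s sinh m)² ≤ (m sinh s)²`,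
where `|m| ≤ |s|` because `ab ≥ 0`. This says that `sinh t / t` increases with `|t|`, which
is the monotonicity of the secant slopes of `sinh` through the origin: `sinh` is convex on
`[0, ∞)` since its derivative `cosh` is monotone there. The remainder `R_ij(k₀)` is `-k₀` times
the elementary expression in `a = √(-k₀) dᵢ`, `b = √(-k₀) dⱼ`, which is the key inequality
divided by `a² b² sinh a sinh b`.
-/

open Real

namespace Real

theorem convexOn_sinh : ConvexOn ℝ (Set.Ici 0) sinh := by
  refine MonotoneOn.convexOn_of_deriv (convex_Ici 0) continuous_sinh.continuousOn
    differentiable_sinh.differentiableOn ?_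
  rw [deriv_sinh, interior_Ici]
  exact cosh_strictMonoOn.monotoneOn.mono Set.Ioi_subset_Ici_self

theorem mul_sinh_le_mul_sinh {x y : ℝ} (hx : 0 ≤ x) (hxy : x ≤ y) :
    y * sinh x ≤ x * sinh y := by
  rcases hx.eq_or_lt with rfl | hx
  · simp
  have hy : 0 < y := hx.trans_le hxy
  have hslope := convexOn_sinh.secant_mono (a := 0) Set.self_mem_Ici hx.le hy.le
    hx.ne' hy.ne' hxy
  simp only [sinh_zero, sub_zero] at hslope
  rw [div_le_div_iff₀ hx hy] at hslope
  linarith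

theorem sq_mul_sinh_le_sq_mul_sinh {x y : ℝ} (hxy : |x| ≤ |y|) :
    (y * sinh x) ^ 2 ≤ (x * sinh y) ^ 2 := by
  rw [← sq_abs, ← sq_abs (x * sinh y), abs_mul, abs_mul, abs_sinh, abs_sinh]
  have hsinh := mul_sinh_le_mul_sinh (abs_nonneg x) hxy
  gcongr

theorem two_mul_mul_cosh_mul_cosh_sub_one_le {a b : ℝ} (hab : 0 ≤ a * b) :
    2 * a * b * (cosh a * cosh b - 1) ≤ (a ^ 2 + b ^ 2) * (sinh a * sinh b) := by
  obtain ⟨s, m, rfl, rfl⟩ : ∃ s m, a = s + m ∧ b = s - m :=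
    ⟨(a + b) / 2, (a - b) / 2, by ring, by ring⟩
  have hms : |m| ≤ |s| := sq_le_sq.mp (by nlinarith)
  have hdiff : ((s + m) ^ 2 + (s - m) ^ 2) * (sinh (s + m) * sinh (s - m))
      - 2 * (s + m) * (s - m) * (cosh (s + m) * cosh (s - m) - 1)
      = 4 * ((m * sinh s) ^ 2 - (s * sinh m) ^ 2) := by
    rw [cosh_add, cosh_sub, sinh_add, sinh_sub]
    -- `cosh_sq` reduces `sinh a sinh b` to `sinh² s - sinh² m` and `cosh a cosh b - 1` to
    -- `sinh² s + sinh² m`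
    linear_combination
      (2 * (s ^ 2 + m ^ 2) * sinh s ^ 2 - 2 * (s ^ 2 - m ^ 2) * cosh s ^ 2) * cosh_sq m
        - (2 * (s ^ 2 + m ^ 2) * sinh m ^ 2 + 2 * (s ^ 2 - m ^ 2) * (sinh m ^ 2 + 1)) * cosh_sq s
  linarith [sq_mul_sinh_le_sq_mul_sinh hms]

theorem inv_sq_add_inv_sq_add_coth_remainder_nonneg {a b : ℝ} (ha : 0 < a) (hb : 0 < b) :
    0 ≤ 1 / a ^ 2 + 1 / b ^ 2
      + 2 / (a * b) * (1 / (sinh a * sinh b) - cosh a / sinh a * (cosh b / sinh b)) := by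
  have hsa : 0 < sinh a := sinh_pos_iff.mpr ha
  have hsb : 0 < sinh b := sinh_pos_iff.mpr hb
  have hform : 1 / a ^ 2 + 1 / b ^ 2
      + 2 / (a * b) * (1 / (sinh a * sinh b) - cosh a / sinh a * (cosh b / sinh b))
      = ((a ^ 2 + b ^ 2) * (sinh a * sinh b) - 2 * a * b * (cosh a * cosh b - 1))
        / (a ^ 2 * b ^ 2 * (sinh a * sinh b)) := by
    field_simp
    ring
  rw [hform]
  exact div_nonneg (sub_nonneg.mpr (two_mul_mul_cosh_mul_cosh_sub_one_le (by positivity)))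
    (by positivity)

end Real

theorem R_ij_nonneg (k₀ di dj : ℝ) (hk : k₀ < 0) (hdi : 0 < di) (hdj : 0 < dj) :
    0 ≤ 1 / di ^ 2 + 1 / dj ^ 2 - (2 / (k₀ * di * dj)) *
      (1 / ((Real.sinh (Real.sqrt (-k₀) * di) / Real.sqrt (-k₀)) *
             (Real.sinh (Real.sqrt (-k₀) * dj) / Real.sqrt (-k₀)))
        - (Real.sqrt (-k₀) * (Real.cosh (Real.sqrt (-k₀) * di) / Real.sinh (Real.sqrt (-k₀) * di))) *
          (Real.sqrt (-k₀) * (Real.cosh (Real.sqrt (-k₀) * dj) / Real.sinh (Real.sqrt (-k₀) * dj)))) := by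
  set c := √(-k₀)
  have hc : 0 < c := sqrt_pos.mpr (neg_pos.mpr hk)
  have hk₀ : k₀ = -c ^ 2 := by rw [sq_sqrt (neg_nonneg.mpr hk.le), neg_neg]
  have hscale : 1 / di ^ 2 + 1 / dj ^ 2 - 2 / (k₀ * di * dj) *
      (1 / (sinh (c * di) / c * (sinh (c * dj) / c))
        - c * (cosh (c * di) / sinh (c * di)) * (c * (cosh (c * dj) / sinh (c * dj))))
      = c ^ 2 * (1 / (c * di) ^ 2 + 1 / (c * dj) ^ 2 + 2 / (c * di * (c * dj)) *
        (1 / (sinh (c * di) * sinh (c * dj))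
          - cosh (c * di) / sinh (c * di) * (cosh (c * dj) / sinh (c * dj)))) := by
    rw [hk₀]
    field_simp
    ring
  rw [hscale]
  exact mul_nonneg (sq_nonneg c)
    (inv_sq_add_inv_sq_add_coth_remainder_nonneg (by positivity) (by positivity))
end
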